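/- Suppose M > 0, N > 0, p ≤ 1 and δ₁/K₀ > δ₂. Then the transcendental equation G(M,p,y) = y + N·y³ has exactly one solution ξ in the interval (0, √(B/(A·M))). -/

import Mathlib

open Real MeasureTheory Filter Set
open scoped Topology

/-- `g p y = ∫₀^y exp(−r² + p·r·y) dr`. -/
noncomputable def g (p y : ℝ) : ℝ := ∫ r in (0:ℝ)..y, Real.exp (-r^2 + p*r*y)

/-- Complementary error function `erfc z = (2/√π)∫_z^∞ exp(−r²) dr`. -/
noncomputable def erfc (z : ℝ) : ℝ := (2 / Real.sqrt π) * ∫ r in Set.Ioi z, Real.exp (-r^2)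

lemma expsq_integrable : Integrable (fun r : ℝ => Real.exp (-r^2)) := by
  have := integrable_exp_neg_mul_sq (by norm_num : (0:ℝ) < 1)
  simpa using this

lemma expsq_cont : Continuous (fun r : ℝ => Real.exp (-r^2)) := by continuity

lemma J_split (a b : ℝ) :
    (∫ r in Set.Ioi a, Real.exp (-r^2))
      = (∫ r in a..b, Real.exp (-r^2)) + ∫ r in Set.Ioi b, Real.exp (-r^2) := by
  have key : ∀ u v : ℝ, u ≤ v →
      (∫ r in Set.Ioi u, Real.exp (-r^2))
        = (∫ r in u..v, Real.exp (-r^2)) + ∫ r in Set.Ioi v, Real.exp (-r^2) := by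
    intro u v huv
    rw [intervalIntegral.integral_of_le huv, ← setIntegral_union
      (Ioc_disjoint_Ioi le_rfl) measurableSet_Ioi expsq_integrable.integrableOn
      expsq_integrable.integrableOn, Ioc_union_Ioi_eq_Ioi huv]
  rcases le_total a b with hab | hba
  · exact key a b hab
  · have := key b a hba
    rw [intervalIntegral.integral_symm]
    linarith
lemma sqrt_pi_pos : 0 < Real.sqrt π := Real.sqrt_pos.mpr pi_pos

lemma erfc_pos (z : ℝ) : 0 < erfc z := by
  have h1 : 0 < ∫ r in Set.Ioi z, Real.exp (-r^2) := by
    rw [setIntegral_pos_iff_support_of_nonneg_ae]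
    · have : (Function.support fun r : ℝ => Real.exp (-r^2)) = Set.univ := by
        ext r; simp [Function.support, Real.exp_ne_zero]
      rw [this, Set.univ_inter, Real.volume_Ioi]
      exact ENNReal.zero_lt_top
    · exact Filter.Eventually.of_forall fun r => (Real.exp_pos _).le
    · exact expsq_integrable.integrableOn
  unfold erfc
  exact mul_pos (by positivity) h1

lemma erfc_zero : erfc 0 = 1 := by
  have h := integral_gaussian_Ioi 1
  unfold erfc
  rw [show (fun r : ℝ => Real.exp (-r^2)) = fun r : ℝ => Real.exp (-1 * r^2) by
    funext r; ring_nf]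
  rw [h, div_one]
  field_simp

lemma hasDerivAt_erfc (z : ℝ) :
    HasDerivAt erfc (-(2 / Real.sqrt π * Real.exp (-z^2))) z := by
  have heq : erfc = fun z => (2 / Real.sqrt π) *
      ((∫ r in Set.Ioi (0:ℝ), Real.exp (-r^2)) - ∫ r in (0:ℝ)..z, Real.exp (-r^2)) := by
    funext w
    unfold erfc
    rw [J_split 0 w]; ring
  rw [heq]
  have hftc : HasDerivAt (fun u => ∫ r in (0:ℝ)..u, Real.exp (-r^2))
      (Real.exp (-z^2)) z :=
    intervalIntegral.integral_hasDerivAt_right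
      (expsq_cont.intervalIntegrable _ _)
      (expsq_cont.stronglyMeasurableAtFilter _ _)
      expsq_cont.continuousAt
  have := (hftc.const_sub (∫ r in Set.Ioi (0:ℝ), Real.exp (-r^2))).const_mul (2 / Real.sqrt π)
  exact this.congr_deriv (by
  ring)

lemma continuous_erfc : Continuous erfc :=
  continuous_iff_continuousAt.mpr fun z => (hasDerivAt_erfc z).continuousAt

-- Mills-type bound
lemma integral_r_exp (z : ℝ) (hz : 0 < z) :
    ∫ r in Set.Ioi z, r * Real.exp (-r^2) = Real.exp (-z^2) / 2 := by
  have hint : IntegrableOn (fun r : ℝ => r * Real.exp (-r^2)) (Set.Ioi z) := by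
    have hg : IntegrableOn (fun r : ℝ => Real.exp (-(1/2) * r^2)) (Set.Ioi z) :=
      (integrable_exp_neg_mul_sq (by norm_num : (0:ℝ) < 1/2)).integrableOn
    refine Integrable.mono' hg ?_ ?_
    · exact ((continuous_id.mul expsq_cont)).aestronglyMeasurable
    · rw [ae_restrict_iff' measurableSet_Ioi]
      refine Filter.Eventually.of_forall fun r hr => ?_
      have hr0 : 0 < r := hz.trans hr
      have h1 : r ≤ Real.exp (r^2/2) := by
        have := Real.add_one_le_exp (r^2/2)
        nlinarith
      rw [Real.norm_eq_abs, abs_mul, abs_of_pos hr0, abs_of_pos (Real.exp_pos _)]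
      calc r * Real.exp (-r^2) ≤ Real.exp (r^2/2) * Real.exp (-r^2) := by
            exact mul_le_mul_of_nonneg_right h1 (Real.exp_pos _).le
        _ = Real.exp (-(1/2) * r^2) := by rw [← Real.exp_add]; ring_nf
  have hderiv : ∀ x ∈ Set.Ici z, HasDerivAt (fun r : ℝ => -Real.exp (-r^2) / 2)
      (x * Real.exp (-x^2)) x := by
    intro x _
    have h1 : HasDerivAt (fun r : ℝ => -r^2) (-(2*x)) x := by
      have := (hasDerivAt_pow 2 x).neg
      exact this.congr_deriv (by push_cast; ring)
    have := ((h1.exp).neg).div_const 2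
    exact this.congr_deriv (by
    push_cast; ring)
  have htend : Tendsto (fun r : ℝ => -Real.exp (-r^2) / 2) atTop (𝓝 0) := by
    have h2 : Tendsto (fun r : ℝ => -r^2) atTop atBot := by
      apply Filter.Tendsto.comp tendsto_neg_atTop_atBot
      exact tendsto_pow_atTop two_ne_zero
    have := (Real.tendsto_exp_atBot.comp h2).neg.div_const 2
    simpa using this
  have := integral_Ioi_of_hasDerivAt_of_tendsto' hderiv hint htend
  rw [this]; ring

lemma mills (z : ℝ) (hz : 0 < z) :
    2 * z * (∫ r in Set.Ioi z, Real.exp (-r^2)) ≤ Real.exp (-z^2) := by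
  have hle : (∫ r in Set.Ioi z, Real.exp (-r^2))
      ≤ ∫ r in Set.Ioi z, z⁻¹ * (r * Real.exp (-r^2)) := by
    apply setIntegral_mono_on expsq_integrable.integrableOn
    · apply Integrable.const_mul
      have hg : IntegrableOn (fun r : ℝ => Real.exp (-(1/2) * r^2)) (Set.Ioi z) :=
        (integrable_exp_neg_mul_sq (by norm_num : (0:ℝ) < 1/2)).integrableOn
      refine Integrable.mono' hg ((continuous_id.mul expsq_cont)).aestronglyMeasurable ?_
      rw [ae_restrict_iff' measurableSet_Ioi]
      refine Filter.Eventually.of_forall fun r hr => ?_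
      have hr0 : 0 < r := hz.trans hr
      have h1 : r ≤ Real.exp (r^2/2) := by
        have := Real.add_one_le_exp (r^2/2)
        nlinarith
      rw [Real.norm_eq_abs, abs_mul, abs_of_pos hr0, abs_of_pos (Real.exp_pos _)]
      calc r * Real.exp (-r^2) ≤ Real.exp (r^2/2) * Real.exp (-r^2) := by
            exact mul_le_mul_of_nonneg_right h1 (Real.exp_pos _).le
        _ = Real.exp (-(1/2) * r^2) := by rw [← Real.exp_add]; ring_nf
    · exact measurableSet_Ioi
    · intro r hr
      have hrz : z ≤ r := le_of_lt hr
      have h1 : 1 ≤ z⁻¹ * r := by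
        rw [← div_eq_inv_mul]
        exact (one_le_div hz).mpr hrz
      nlinarith [Real.exp_pos (-r^2)]
  rw [integral_const_mul, integral_r_exp z hz] at hle
  have h2 : 2 * z * (∫ r in Set.Ioi z, Real.exp (-r^2))
      ≤ 2 * z * (z⁻¹ * (Real.exp (-z^2)/2)) := by
    apply mul_le_mul_of_nonneg_left hle (by positivity)
  calc 2 * z * (∫ r in Set.Ioi z, Real.exp (-r^2))
      ≤ 2 * z * (z⁻¹ * (Real.exp (-z^2)/2)) := h2
    _ = Real.exp (-z^2) := by field_simp

noncomputable def WAux (z : ℝ) : ℝ := Real.exp (-z^2) / erfc z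

lemma hasDerivAt_WAux (z : ℝ) :
    HasDerivAt WAux
      (((-(2*z) * Real.exp (-z^2)) * erfc z -
        Real.exp (-z^2) * (-(2 / Real.sqrt π * Real.exp (-z^2)))) / (erfc z)^2) z := by
  have h1 : HasDerivAt (fun z : ℝ => Real.exp (-z^2)) (-(2*z) * Real.exp (-z^2)) z := by
    have hn : HasDerivAt (fun z : ℝ => -z^2) (-(2*z)) z := by
      have := (hasDerivAt_pow 2 z).neg
      exact this.congr_deriv (by push_cast; ring)
    have := hn.exp
    exact this.congr_deriv (by ring)
  exact h1.div (hasDerivAt_erfc z) (erfc_pos z).ne'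

lemma WAux_pos (z : ℝ) : 0 < WAux z := div_pos (Real.exp_pos _) (erfc_pos z)

lemma WAux_mono : MonotoneOn WAux (Set.Ici 0) := by
  apply monotoneOn_of_deriv_nonneg (convex_Ici 0)
  · exact (Continuous.continuousOn (continuous_iff_continuousAt.mpr
      fun z => (hasDerivAt_WAux z).continuousAt))
  · intro z hz
    exact ((hasDerivAt_WAux z).differentiableAt).differentiableWithinAt
  · intro z hz
    rw [interior_Ici] at hz
    rw [(hasDerivAt_WAux z).deriv]
    have hz0 : 0 < z := hz
    have hm : 2 * z * (∫ r in Set.Ioi z, Real.exp (-r^2)) ≤ Real.exp (-z^2) := mills z hz0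
    have herfc : 2 * z * erfc z ≤ 2 / Real.sqrt π * Real.exp (-z^2) := by
      unfold erfc
      calc 2 * z * (2 / Real.sqrt π * ∫ r in Set.Ioi z, Real.exp (-r^2))
          = 2 / Real.sqrt π * (2 * z * ∫ r in Set.Ioi z, Real.exp (-r^2)) := by ring
        _ ≤ 2 / Real.sqrt π * Real.exp (-z^2) := by
            apply mul_le_mul_of_nonneg_left hm (by positivity)
    have hnum : 0 ≤ (-(2*z) * Real.exp (-z^2)) * erfc z -
        Real.exp (-z^2) * (-(2 / Real.sqrt π * Real.exp (-z^2))) := by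
      have := mul_le_mul_of_nonneg_left herfc (Real.exp_pos (-z^2)).le
      nlinarith
    positivity

noncomputable def psiAux (p y : ℝ) : ℝ := ∫ s in (0:ℝ)..1, Real.exp (y^2 * (s*(p-s)))
noncomputable def psiAux' (p y : ℝ) : ℝ :=
  ∫ s in (0:ℝ)..1, (2*y*(s*(p-s))) * Real.exp (y^2 * (s*(p-s)))

lemma psi_cont_integrand (p y : ℝ) :
    Continuous (fun s : ℝ => Real.exp (y^2 * (s*(p-s)))) := by continuity

lemma psiAux_pos (p y : ℝ) : 0 < psiAux p y := by
  apply intervalIntegral.intervalIntegral_pos_of_pos_on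
    ((psi_cont_integrand p y).intervalIntegrable _ _)
  · intro s _; exact Real.exp_pos _
  · norm_num

lemma g_eq (p y : ℝ) : g p y = y * psiAux p y := by
  rcases eq_or_ne y 0 with rfl | hy
  · simp [g]
  · unfold g psiAux
    have h := intervalIntegral.integral_comp_mul_left
      (fun r : ℝ => Real.exp (-r^2 + p*r*y)) (c := y) hy (a := 0) (b := 1)
    simp only [mul_zero, mul_one] at h
    have h2 : (fun s : ℝ => Real.exp (-(y*s)^2 + p*(y*s)*y))
        = fun s : ℝ => Real.exp (y^2 * (s*(p-s))) := by
      funext s; ring_nf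
    rw [h2] at h
    rw [smul_eq_mul] at h
    rw [h]
    field_simp

lemma hasDerivAt_psiAux (p y₀ : ℝ) : HasDerivAt (psiAux p) (psiAux' p y₀) y₀ := by
  set C : ℝ := 2*(|y₀|+1)*(|p|+1) * Real.exp ((|y₀|+1)^2*(|p|+1)) with hC
  have main := intervalIntegral.hasDerivAt_integral_of_dominated_loc_of_deriv_le
    (F := fun x t => Real.exp (x^2 * (t*(p-t))))
    (F' := fun x t => (2*x*(t*(p-t))) * Real.exp (x^2 * (t*(p-t))))
    (x₀ := y₀) (a := 0) (b := 1) (bound := fun _ => C) (s := Metric.ball y₀ 1) (μ := volume) (Metric.ball_mem_nhds y₀ one_pos)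
    ?_ ?_ ?_ ?_ ?_ ?_
  · exact main.2
  · exact Filter.Eventually.of_forall fun x =>
      (psi_cont_integrand p x).aestronglyMeasurable.restrict
  · exact (psi_cont_integrand p y₀).intervalIntegrable _ _
  · exact (Continuous.aestronglyMeasurable (by continuity)).restrict
  · refine Filter.Eventually.of_forall fun t => fun ht x hx => ?_
    have ht' : t ∈ Set.Ioc (0:ℝ) 1 := by
      rwa [Set.uIoc_of_le (by norm_num : (0:ℝ) ≤ 1)] at ht
    have hx' : |x| ≤ |y₀| + 1 := by
      have := abs_sub_abs_le_abs_sub x y₀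
      have hb : |x - y₀| < 1 := by rwa [Metric.mem_ball, Real.dist_eq] at hx
      linarith
    have htb : |t*(p-t)| ≤ |p| + 1 := by
      rw [abs_mul]
      have h1 : |t| ≤ 1 := by rw [abs_of_pos ht'.1]; exact ht'.2
      have h2 : |p - t| ≤ |p| + 1 := by
        have := abs_sub_abs_le_abs_sub p t  -- not directly; use abs_sub
        calc |p - t| ≤ |p| + |t| := abs_sub p t
          _ ≤ |p| + 1 := by linarith
      calc |t| * |p-t| ≤ 1 * (|p|+1) := by
            apply mul_le_mul h1 h2 (abs_nonneg _) zero_le_one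
        _ = |p| + 1 := by ring
    rw [Real.norm_eq_abs, abs_mul, Real.abs_exp]
    have hexp : Real.exp (x^2 * (t*(p-t))) ≤ Real.exp ((|y₀|+1)^2*(|p|+1)) := by
      apply Real.exp_le_exp.mpr
      calc x^2 * (t*(p-t)) ≤ |x^2 * (t*(p-t))| := le_abs_self _
        _ = |x|^2 * |t*(p-t)| := by rw [abs_mul, abs_pow]
        _ ≤ (|y₀|+1)^2 * (|p|+1) := by
            apply mul_le_mul (by nlinarith [abs_nonneg x]) htb (abs_nonneg _) (by positivity)
    have habs : |2*x*(t*(p-t))| ≤ 2*(|y₀|+1)*(|p|+1) := by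
      rw [abs_mul, abs_mul, abs_two]
      apply mul_le_mul (by linarith) htb (abs_nonneg _) (by positivity)
    calc |2*x*(t*(p-t))| * Real.exp (x^2 * (t*(p-t)))
        ≤ (2*(|y₀|+1)*(|p|+1)) * Real.exp ((|y₀|+1)^2*(|p|+1)) := by
          apply mul_le_mul habs hexp (Real.exp_pos _).le (by positivity)
      _ = C := rfl
  · exact intervalIntegrable_const
  · refine Filter.Eventually.of_forall fun t => fun _ x _ => ?_
    have hinner : HasDerivAt (fun x : ℝ => x^2 * (t*(p-t))) (2*x*(t*(p-t))) x := by
      have := (hasDerivAt_pow 2 x).mul_const (t*(p-t))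
      exact this.congr_deriv (by push_cast; ring)
    have := hinner.exp
    exact this.congr_deriv (by ring)

noncomputable def gd (p y : ℝ) : ℝ := psiAux p y + y * psiAux' p y

lemma hasDerivAt_g (p y₀ : ℝ) : HasDerivAt (g p) (gd p y₀) y₀ := by
  have : g p = fun y => y * psiAux p y := funext (g_eq p)
  rw [this]
  have := (hasDerivAt_id y₀).mul (hasDerivAt_psiAux p y₀)
  exact this.congr_deriv (by
  unfold gd; simp only [id_eq]; ring)

lemma continuous_g (p : ℝ) : Continuous (g p) :=
  continuous_iff_continuousAt.mpr fun y => (hasDerivAt_g p y).continuousAt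

lemma ftc_id (p y : ℝ) :
    ∫ s in (0:ℝ)..1, (Real.exp (y^2*(s*(p-s))) +
      s * (Real.exp (y^2*(s*(p-s))) * (y^2*(p - 2*s)))) = Real.exp (y^2*(p-1)) := by
  have hderiv : ∀ s ∈ Set.uIcc (0:ℝ) 1,
      HasDerivAt (fun s : ℝ => s * Real.exp (y^2*(s*(p-s))))
        (Real.exp (y^2*(s*(p-s))) + s * (Real.exp (y^2*(s*(p-s))) * (y^2*(p - 2*s)))) s := by
    intro s _
    have hu : HasDerivAt (fun s : ℝ => y^2*(s*(p-s))) (y^2*(p - 2*s)) s := by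
      have := (((hasDerivAt_id s).mul
        ((hasDerivAt_const s p).sub (hasDerivAt_id s)))).const_mul (y^2)
      exact this.congr_deriv (by simp only [id_eq, Pi.sub_apply]; ring)
    have := (hasDerivAt_id s).mul hu.exp
    exact this.congr_deriv (by simp only [id_eq]; ring)
  have hint : IntervalIntegrable (fun s : ℝ => Real.exp (y^2*(s*(p-s))) +
      s * (Real.exp (y^2*(s*(p-s))) * (y^2*(p - 2*s)))) volume 0 1 := by
    apply Continuous.intervalIntegrable; continuity
  have h := intervalIntegral.integral_eq_sub_of_hasDerivAt hderiv hint
  rw [h]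
  norm_num

lemma gd_eq (p y : ℝ) : gd p y = Real.exp (y^2*(p-1)) +
    p*y^2 * ∫ s in (0:ℝ)..1, s * Real.exp (y^2*(s*(p-s))) := by
  have hc1 : Continuous (fun s : ℝ => Real.exp (y^2*(s*(p-s)))) := psi_cont_integrand p y
  have hy' : y * psiAux' p y
      = ∫ s in (0:ℝ)..1, (2*y^2*(s*(p-s))) * Real.exp (y^2*(s*(p-s))) := by
    unfold psiAux'
    rw [← intervalIntegral.integral_const_mul]
    apply intervalIntegral.integral_congr
    intro s _; simp only []; ring
  have hadd : gd p y = ∫ s in (0:ℝ)..1, (Real.exp (y^2*(s*(p-s))) +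
      (2*y^2*(s*(p-s))) * Real.exp (y^2*(s*(p-s)))) := by
    unfold gd psiAux
    rw [hy', intervalIntegral.integral_add (hc1.intervalIntegrable _ _)
      (by apply Continuous.intervalIntegrable; continuity)]
  have hsub : (∫ s in (0:ℝ)..1, (Real.exp (y^2*(s*(p-s))) +
        (2*y^2*(s*(p-s))) * Real.exp (y^2*(s*(p-s)))))
      - (∫ s in (0:ℝ)..1, (Real.exp (y^2*(s*(p-s))) +
        s * (Real.exp (y^2*(s*(p-s))) * (y^2*(p - 2*s)))))
      = p*y^2 * ∫ s in (0:ℝ)..1, s * Real.exp (y^2*(s*(p-s))) := by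
    rw [← intervalIntegral.integral_sub
      (by apply Continuous.intervalIntegrable; continuity)
      (by apply Continuous.intervalIntegrable; continuity)]
    rw [← intervalIntegral.integral_const_mul]
    apply intervalIntegral.integral_congr
    intro s _; simp only []; ring
  rw [hadd]
  rw [ftc_id p y] at hsub
  linarith

lemma keyineq (p : ℝ) (hp : p ≤ 1) (K₀ : ℝ) (hK : 0 < K₀) (y : ℝ) (hy : 0 < y) :
    0 < 2*(1-p)*y*(K₀ + g p y) + gd p y := by
  have hψ := psiAux_pos p y
  have hI1pos : 0 ≤ ∫ s in (0:ℝ)..1, s * Real.exp (y^2*(s*(p-s))) := by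
    apply intervalIntegral.integral_nonneg (by norm_num)
    intro s hs; exact mul_nonneg hs.1 (Real.exp_pos _).le
  have hI1le : (∫ s in (0:ℝ)..1, s * Real.exp (y^2*(s*(p-s)))) ≤ psiAux p y := by
    unfold psiAux
    apply intervalIntegral.integral_mono_on (by norm_num)
      (by apply Continuous.intervalIntegrable; continuity)
      ((psi_cont_integrand p y).intervalIntegrable _ _)
    intro s hs
    nlinarith [Real.exp_pos (y^2*(s*(p-s))), hs.1, hs.2]
  have hE := Real.exp_pos (y^2*(p-1))
  rw [g_eq, gd_eq]
  set I1 := ∫ s in (0:ℝ)..1, s * Real.exp (y^2*(s*(p-s))) with hI1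
  rcases le_or_gt 0 p with hp0 | hp0
  · nlinarith [mul_pos hy hK, mul_nonneg (mul_nonneg hp0 (sq_nonneg y)) hI1pos,
      mul_nonneg (mul_nonneg (sub_nonneg.mpr hp) hy.le) (mul_pos hy hψ).le]
  · have hkey : p * y^2 * psiAux p y ≤ p * y^2 * I1 := by
      apply mul_le_mul_of_nonpos_left hI1le
      nlinarith [sq_nonneg y]
    nlinarith [mul_pos hy hK, mul_pos (mul_pos hy hy) hψ,
      mul_nonneg (mul_nonneg (sub_nonneg.mpr hp) hy.le) hK.le]

noncomputable def phiAux (K₀ p y : ℝ) : ℝ := Real.exp ((1-p)*y^2) * (K₀ + g p y)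

lemma hasDerivAt_phiAux (K₀ p y : ℝ) : HasDerivAt (phiAux K₀ p)
    (Real.exp ((1-p)*y^2) * ((1-p)*(2*y)) * (K₀ + g p y)
      + Real.exp ((1-p)*y^2) * gd p y) y := by
  have hu : HasDerivAt (fun y : ℝ => (1-p)*y^2) ((1-p)*(2*y)) y := by
    have := (hasDerivAt_pow 2 y).const_mul (1-p)
    exact this.congr_deriv (by push_cast; ring)
  have h1 := hu.exp
  have h2 := (hasDerivAt_g p y).const_add K₀
  exact h1.mul h2

lemma phiAux_pos (K₀ p : ℝ) (hK : 0 < K₀) (y : ℝ) (hy : 0 ≤ y) :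
    0 < phiAux K₀ p y := by
  unfold phiAux
  have : 0 < K₀ + g p y := by
    rw [g_eq]
    nlinarith [psiAux_pos p y]
  positivity

lemma phiAux_mono (K₀ p : ℝ) (hK : 0 < K₀) (hp : p ≤ 1) :
    StrictMonoOn (phiAux K₀ p) (Set.Ici 0) := by
  apply strictMonoOn_of_deriv_pos (convex_Ici 0)
  · exact Continuous.continuousOn (continuous_iff_continuousAt.mpr
      fun y => (hasDerivAt_phiAux K₀ p y).continuousAt)
  · intro x hx
    rw [interior_Ici] at hx
    rw [(hasDerivAt_phiAux K₀ p x).deriv]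
    nlinarith [mul_pos (Real.exp_pos ((1-p)*x^2)) (keyineq p hp K₀ hK x hx)]


/-- `G₁(p,y) = exp((p−1)y²)/(K₀ + g(p,y))`. -/
noncomputable def G₁ (K₀ p y : ℝ) : ℝ := Real.exp ((p-1)*y^2) / (K₀ + g p y)

/-- `G₂(y) = exp(−γ₀²y²)/erfc(γ₀y)`. -/
noncomputable def G₂ (γ₀ y : ℝ) : ℝ := Real.exp (-(γ₀^2*y^2)) / erfc (γ₀*y)

/-- `G(M,p,y) = δ₁(1 − (A·M/B)y²)G₁(p,y) − δ₂(1 + M·y²)G₂(y)`. -/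
noncomputable def Gfun (A B δ₁ δ₂ K₀ γ₀ M p y : ℝ) : ℝ :=
  δ₁ * (1 - A*M/B * y^2) * G₁ K₀ p y - δ₂ * (1 + M*y^2) * G₂ γ₀ y

lemma G₁_eq (K₀ p y : ℝ) : G₁ K₀ p y = 1 / phiAux K₀ p y := by
  unfold G₁ phiAux
  rw [show (p-1)*y^2 = -((1-p)*y^2) by ring, Real.exp_neg]
  rw [div_eq_mul_inv, one_div, mul_inv]

lemma G₂_eq (γ₀ y : ℝ) : G₂ γ₀ y = WAux (γ₀*y) := by
  unfold G₂ WAux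
  rw [show -(γ₀^2*y^2) = -((γ₀*y)^2) by ring]

noncomputable def Faux (A B δ₁ δ₂ K₀ γ₀ M N p y : ℝ) : ℝ :=
  δ₁ * (1 - A*M/B * y^2) * (1 / phiAux K₀ p y)
    - δ₂ * (1 + M*y^2) * WAux (γ₀*y) - (y + N*y^3)

lemma Faux_eq (A B δ₁ δ₂ K₀ γ₀ M N p y : ℝ) :
    Faux A B δ₁ δ₂ K₀ γ₀ M N p y = Gfun A B δ₁ δ₂ K₀ γ₀ M p y - (y + N*y^3) := by
  unfold Faux Gfun
  rw [G₁_eq, G₂_eq]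

lemma Faux_cont (A B δ₁ δ₂ K₀ γ₀ M N p : ℝ) (hK₀ : 0 < K₀) (s : Set ℝ)
    (hs : s ⊆ Set.Ici 0) : ContinuousOn (Faux A B δ₁ δ₂ K₀ γ₀ M N p) s := by
  have hφcont : Continuous (phiAux K₀ p) :=
    continuous_iff_continuousAt.mpr fun y => (hasDerivAt_phiAux K₀ p y).continuousAt
  have hWcont : Continuous (fun y : ℝ => WAux (γ₀*y)) :=
    (continuous_iff_continuousAt.mpr fun z => (hasDerivAt_WAux z).continuousAt).comp
      (continuous_const.mul continuous_id)
  unfold Faux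
  apply ContinuousOn.sub
  · apply ContinuousOn.sub
    · exact (continuousOn_const.mul (by fun_prop)).mul
        (continuousOn_const.div hφcont.continuousOn
          (fun y hy => (phiAux_pos K₀ p hK₀ y (hs hy)).ne'))
    · exact (continuousOn_const.mul (by fun_prop)).mul hWcont.continuousOn
  · fun_prop

lemma Faux_zero (A B δ₁ δ₂ K₀ γ₀ M N p : ℝ) (hK₀ : 0 < K₀) (h : δ₂ < δ₁ / K₀) :
    0 < Faux A B δ₁ δ₂ K₀ γ₀ M N p 0 := by
  have hg0 : g p 0 = 0 := by rw [g_eq]; ring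
  have hφ0 : phiAux K₀ p 0 = K₀ := by unfold phiAux; rw [hg0]; norm_num
  have hW0 : WAux (γ₀*0) = 1 := by
    unfold WAux; rw [mul_zero]; norm_num [erfc_zero]
  unfold Faux
  rw [hφ0, hW0]
  have heq : δ₁ * (1 - A*M/B * 0^2) * (1 / K₀) - δ₂ * (1 + M*0^2) * 1 - (0 + N*0^3)
      = δ₁/K₀ - δ₂ := by field_simp; ring
  rw [heq]
  linarith

lemma Faux_anti (A B δ₁ δ₂ K₀ γ₀ M N p : ℝ)
    (hA : 0 < A) (hB : 0 < B) (hδ₁ : 0 < δ₁) (hδ₂ : 0 < δ₂)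
    (hK₀ : 0 < K₀) (hγ₀ : 0 < γ₀) (hM : 0 < M) (hN : 0 < N) (hp : p ≤ 1) :
    StrictAntiOn (Faux A B δ₁ δ₂ K₀ γ₀ M N p)
      (Set.Icc 0 (Real.sqrt (B/(A*M)))) := by
  set L := Real.sqrt (B/(A*M)) with hLdef
  have hBAM : 0 < B/(A*M) := div_pos hB (mul_pos hA hM)
  have hL2 : L^2 = B/(A*M) := Real.sq_sqrt hBAM.le
  have hc : A*M/B * L^2 = 1 := by rw [hL2]; field_simp
  intro y₁ h₁ y₂ h₂ h12
  have h10 : 0 ≤ y₁ := h₁.1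
  have h2L : y₂ ≤ L := h₂.2
  have h20 : 0 < y₂ := lt_of_le_of_lt h10 h12
  have hφ1 := phiAux_pos K₀ p hK₀ y₁ h10
  have hφ2 := phiAux_pos K₀ p hK₀ y₂ h20.le
  have hφlt : phiAux K₀ p y₁ < phiAux K₀ p y₂ :=
    phiAux_mono K₀ p hK₀ hp h10 h20.le h12
  have hsq : y₁^2 < y₂^2 := by nlinarith
  have hcpos : 0 < A*M/B := div_pos (mul_pos hA hM) hB
  have ha2 : 0 ≤ 1 - A*M/B*y₂^2 := by
    have h3 : A*M/B*y₂^2 ≤ A*M/B*L^2 :=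
      mul_le_mul_of_nonneg_left (pow_le_pow_left₀ h20.le h2L 2) hcpos.le
    rw [hc] at h3; linarith
  have ha12 : 1 - A*M/B*y₂^2 < 1 - A*M/B*y₁^2 := by
    have := mul_lt_mul_of_pos_left hsq hcpos
    linarith
  have hT1 : δ₁*(1 - A*M/B*y₂^2)*(1/phiAux K₀ p y₂)
      < δ₁*(1 - A*M/B*y₁^2)*(1/phiAux K₀ p y₁) := by
    have hinv : 1/phiAux K₀ p y₂ < 1/phiAux K₀ p y₁ :=
      one_div_lt_one_div_of_lt hφ1 hφlt
    have step1 : (1 - A*M/B*y₂^2)*(1/phiAux K₀ p y₂)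
        ≤ (1 - A*M/B*y₂^2)*(1/phiAux K₀ p y₁) :=
      mul_le_mul_of_nonneg_left hinv.le ha2
    have step2 : (1 - A*M/B*y₂^2)*(1/phiAux K₀ p y₁)
        < (1 - A*M/B*y₁^2)*(1/phiAux K₀ p y₁) :=
      mul_lt_mul_of_pos_right ha12 (one_div_pos.mpr hφ1)
    rw [mul_assoc, mul_assoc]
    exact mul_lt_mul_of_pos_left (lt_of_le_of_lt step1 step2) hδ₁
  have hT2 : δ₂*(1+M*y₁^2)*WAux (γ₀*y₁) ≤ δ₂*(1+M*y₂^2)*WAux (γ₀*y₂) := by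
    have hw12 : WAux (γ₀*y₁) ≤ WAux (γ₀*y₂) := by
      apply WAux_mono (mul_nonneg hγ₀.le h10) (mul_nonneg hγ₀.le h20.le)
      exact mul_le_mul_of_nonneg_left h12.le hγ₀.le
    have h1' : (1+M*y₁^2) ≤ (1+M*y₂^2) := by nlinarith
    have hbase : (1+M*y₁^2)*WAux (γ₀*y₁) ≤ (1+M*y₂^2)*WAux (γ₀*y₂) := by
      apply mul_le_mul h1' hw12 (WAux_pos _).le (by nlinarith)
    rw [mul_assoc, mul_assoc]
    exact mul_le_mul_of_nonneg_left hbase hδ₂.le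
  have hT3 : y₁ + N*y₁^3 < y₂ + N*y₂^3 := by
    have hcube : y₁^3 < y₂^3 := by
      apply pow_lt_pow_left₀ h12 h10
      norm_num
    have hNc := mul_lt_mul_of_pos_left hcube hN
    linarith
  unfold Faux
  linarith

lemma Faux_L (A B δ₁ δ₂ K₀ γ₀ M N p : ℝ)
    (hA : 0 < A) (hB : 0 < B) (hδ₂ : 0 < δ₂)
    (hM : 0 < M) (hN : 0 < N) :
    Faux A B δ₁ δ₂ K₀ γ₀ M N p (Real.sqrt (B/(A*M))) < 0 := by
  set L := Real.sqrt (B/(A*M)) with hLdef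
  have hBAM : 0 < B/(A*M) := div_pos hB (mul_pos hA hM)
  have hL : 0 < L := Real.sqrt_pos.mpr hBAM
  have hL2 : L^2 = B/(A*M) := Real.sq_sqrt hBAM.le
  have hc : A*M/B * L^2 = 1 := by rw [hL2]; field_simp
  unfold Faux
  have h1 : 1 - A*M/B * L^2 = 0 := by rw [hc]; ring
  rw [h1]
  have hWp := WAux_pos (γ₀*L)
  have hml : 0 < 1 + M*L^2 := by nlinarith [pow_pos hL 2]
  have hprod : 0 < δ₂ * (1 + M*L^2) * WAux (γ₀*L) := mul_pos (mul_pos hδ₂ hml) hWp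
  have hcube : 0 < L + N*L^3 := by nlinarith [pow_pos hL 3]
  linarith

/-- If `M > 0`, `N > 0`, `p ≤ 1` and `δ₁/K₀ > δ₂`, then the transcendental
equation `G(M,p,y) = y + N·y³` has exactly one solution `ξ` in `(0, √(B/(A·M)))`. -/
theorem stmt1 (A B δ₁ δ₂ K₀ γ₀ M N p : ℝ)
    (hA : 0 < A) (hB : 0 < B) (hδ₁ : 0 < δ₁) (hδ₂ : 0 < δ₂)
    (hK₀ : 0 < K₀) (hγ₀ : 0 < γ₀) (hM : 0 < M) (hN : 0 < N) (hp : p ≤ 1)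
    (h : δ₂ < δ₁ / K₀) :
    ∃! ξ : ℝ, 0 < ξ ∧ ξ < Real.sqrt (B / (A * M)) ∧
      Gfun A B δ₁ δ₂ K₀ γ₀ M p ξ = ξ + N * ξ^3 := by
  set L := Real.sqrt (B/(A*M)) with hLdef
  have hBAM : 0 < B/(A*M) := div_pos hB (mul_pos hA hM)
  have hL : 0 < L := Real.sqrt_pos.mpr hBAM
  set F := Faux A B δ₁ δ₂ K₀ γ₀ M N p with hF
  have hFcont : ContinuousOn F (Set.Icc 0 L) :=
    Faux_cont A B δ₁ δ₂ K₀ γ₀ M N p hK₀ _ (fun y hy => hy.1)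
  have hF0 : 0 < F 0 := Faux_zero A B δ₁ δ₂ K₀ γ₀ M N p hK₀ h
  have hFL : F L < 0 := Faux_L A B δ₁ δ₂ K₀ γ₀ M N p hA hB hδ₂ hM hN
  have hanti : StrictAntiOn F (Set.Icc 0 L) :=
    Faux_anti A B δ₁ δ₂ K₀ γ₀ M N p hA hB hδ₁ hδ₂ hK₀ hγ₀ hM hN hp
  have hivt := intermediate_value_Ioo' hL.le hFcont
  have h0mem : (0:ℝ) ∈ Set.Ioo (F L) (F 0) := ⟨hFL, hF0⟩
  obtain ⟨ξ, hξmem, hξ⟩ := hivt h0mem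
  refine ⟨ξ, ⟨hξmem.1, hξmem.2, ?_⟩, ?_⟩
  · have h2 := Faux_eq A B δ₁ δ₂ K₀ γ₀ M N p ξ
    rw [← hF, hξ] at h2
    linarith
  · rintro y ⟨hy0, hyL, hyeq⟩
    have hFy : F y = 0 := by
      rw [hF, Faux_eq, hyeq]; ring
    have hyIcc : y ∈ Set.Icc 0 L := ⟨hy0.le, hyL.le⟩
    have hξIcc : ξ ∈ Set.Icc 0 L := ⟨hξmem.1.le, hξmem.2.le⟩
    by_contra hne
    rcases lt_or_gt_of_ne hne with hlt | hgt
    · have hcontr := hanti hyIcc hξIcc hlt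
      rw [hFy, hξ] at hcontr
      exact lt_irrefl _ hcontr
    · have hcontr := hanti hξIcc hyIcc hgt
      rw [hFy, hξ] at hcontr
      exact lt_irrefl _ hcontr
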